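/- arXiv:0704.2732 — 7 statements merged into one kernel-verified Lean document; each statement's English description precedes it below -/
import Mathlib

section
/- Let M be any finite simple graph and let i, j, k be nodes of M with i ∼ j and j ∼ k. Then the following identities hold in the Brauer monoid BrM(M): e_j e_i r_k e_j = e_j r_i e_k e_j and e_j r_i r_k e_j = e_j e_i e_k e_j. -/
/-- Generators of the Brauer monoid: `r i`, `e i` for nodes `i`, and `δ`, `δ⁻¹`. -/
inductive BrauerGen (I : Type) : Type
  | r : I → BrauerGen I
  | e : I → BrauerGen I
  | del : BrauerGen I
  | delInv : BrauerGen I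

/-- The defining relations of the Brauer monoid of type `G`. -/
inductive BrauerRel {I : Type} (G : SimpleGraph I) :
    FreeMonoid (BrauerGen I) → FreeMonoid (BrauerGen I) → Prop
  | del_comm (g : BrauerGen I) :
      BrauerRel G (FreeMonoid.of .del * FreeMonoid.of g) (FreeMonoid.of g * FreeMonoid.of .del)
  | delInv_comm (g : BrauerGen I) :
      BrauerRel G (FreeMonoid.of .delInv * FreeMonoid.of g)
        (FreeMonoid.of g * FreeMonoid.of .delInv)
  | del_delInv : BrauerRel G (FreeMonoid.of .del * FreeMonoid.of .delInv) 1
  | rr (i : I) : BrauerRel G (FreeMonoid.of (.r i) * FreeMonoid.of (.r i)) 1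
  | er (i : I) :
      BrauerRel G (FreeMonoid.of (.e i) * FreeMonoid.of (.r i)) (FreeMonoid.of (.e i))
  | re (i : I) :
      BrauerRel G (FreeMonoid.of (.r i) * FreeMonoid.of (.e i)) (FreeMonoid.of (.e i))
  | ee (i : I) :
      BrauerRel G (FreeMonoid.of (.e i) * FreeMonoid.of (.e i))
        (FreeMonoid.of .del * FreeMonoid.of (.e i))
  | rr_comm (i j : I) (hne : i ≠ j) (hnadj : ¬ G.Adj i j) :
      BrauerRel G (FreeMonoid.of (.r i) * FreeMonoid.of (.r j))
        (FreeMonoid.of (.r j) * FreeMonoid.of (.r i))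
  | er_comm (i j : I) (hne : i ≠ j) (hnadj : ¬ G.Adj i j) :
      BrauerRel G (FreeMonoid.of (.e i) * FreeMonoid.of (.r j))
        (FreeMonoid.of (.r j) * FreeMonoid.of (.e i))
  | ee_comm (i j : I) (hne : i ≠ j) (hnadj : ¬ G.Adj i j) :
      BrauerRel G (FreeMonoid.of (.e i) * FreeMonoid.of (.e j))
        (FreeMonoid.of (.e j) * FreeMonoid.of (.e i))
  | braid (i j : I) (hadj : G.Adj i j) :
      BrauerRel G (FreeMonoid.of (.r i) * FreeMonoid.of (.r j) * FreeMonoid.of (.r i))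
        (FreeMonoid.of (.r j) * FreeMonoid.of (.r i) * FreeMonoid.of (.r j))
  | rer (i j : I) (hadj : G.Adj i j) :
      BrauerRel G (FreeMonoid.of (.r j) * FreeMonoid.of (.e i) * FreeMonoid.of (.r j))
        (FreeMonoid.of (.r i) * FreeMonoid.of (.e j) * FreeMonoid.of (.r i))
  | rre (i j : I) (hadj : G.Adj i j) :
      BrauerRel G (FreeMonoid.of (.r j) * FreeMonoid.of (.r i) * FreeMonoid.of (.e j))
        (FreeMonoid.of (.e i) * FreeMonoid.of (.e j))

/-- The congruence generated by the Brauer relations. -/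
def brauerCon {I : Type} (G : SimpleGraph I) : Con (FreeMonoid (BrauerGen I)) :=
  conGen (BrauerRel G)

/-- The Brauer monoid of type `G`. -/
abbrev BrauerMonoid {I : Type} (G : SimpleGraph I) : Type :=
  (brauerCon G).Quotient

namespace BrauerMonoid

variable {I : Type} (G : SimpleGraph I)

/-- The generator `r i` of the Brauer monoid. -/
def R (i : I) : BrauerMonoid G := (brauerCon G).mk' (FreeMonoid.of (.r i))

/-- The generator `e i` of the Brauer monoid. -/
def E (i : I) : BrauerMonoid G := (brauerCon G).mk' (FreeMonoid.of (.e i))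

/-- The generator `δ` of the Brauer monoid. -/
def Delta : BrauerMonoid G := (brauerCon G).mk' (FreeMonoid.of .del)

/-- The generator `δ⁻¹` of the Brauer monoid. -/
def DeltaInv : BrauerMonoid G := (brauerCon G).mk' (FreeMonoid.of .delInv)

end BrauerMonoid

namespace BrauerAux

open BrauerMonoid

variable {I : Type} {G : SimpleGraph I}

lemma rel_eq {x y : FreeMonoid (BrauerGen I)} (h : BrauerRel G x y) :
    (brauerCon G).mk' x = (brauerCon G).mk' y :=
  (Con.eq _).mpr (ConGen.Rel.of x y h)

lemma rr' (i : I) : R G i * R G i = 1 := by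
  simpa [R, map_mul] using rel_eq (BrauerRel.rr (G := G) i)

lemma rre' {i j : I} (h : G.Adj i j) :
    R G j * R G i * E G j = E G i * E G j := by
  simpa [R, E, map_mul, mul_assoc] using rel_eq (BrauerRel.rre i j h)

lemma rer' {i j : I} (h : G.Adj i j) :
    R G j * E G i * R G j = R G i * E G j * R G i := by
  simpa [R, E, map_mul, mul_assoc] using rel_eq (BrauerRel.rer i j h)

lemma rr_c (i : I) (x : BrauerMonoid G) : R G i * (R G i * x) = x := by
  rw [← mul_assoc, rr', one_mul]

/-- `e_j = r_i r_j e_i r_j r_i` for `i ∼ j`. -/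
lemma e_conj {i j : I} (h : G.Adj i j) :
    E G j = R G i * (R G j * (E G i * (R G j * R G i))) := by
  have h1 := rer' h
  have h2 : R G i * (R G j * E G i * R G j) * R G i
      = R G i * (R G i * E G j * R G i) * R G i := by rw [h1]
  calc E G j = R G i * (R G i * (E G j * (R G i * R G i))) := by
        rw [rr', mul_one, rr_c]
    _ = R G i * (R G i * E G j * R G i) * R G i := by
        simp only [mul_assoc]
    _ = R G i * (R G j * E G i * R G j) * R G i := by rw [h1]
    _ = R G i * (R G j * (E G i * (R G j * R G i))) := by
        simp only [mul_assoc]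

/-- reversed `rre`: `e_j r_i r_j = e_j e_i` for `i ∼ j`. -/
lemma revrre {i j : I} (h : G.Adj i j) :
    E G j * (R G i * R G j) = E G j * E G i := by
  have h2 : R G i * R G j * E G i = E G j * E G i := rre' h.symm
  calc E G j * (R G i * R G j)
      = R G i * (R G j * (E G i * (R G j * R G i))) * (R G i * R G j) := by
        rw [← e_conj h]
    _ = R G i * (R G j * (E G i * (R G j * (R G i * (R G i * R G j))))) := by
        simp only [mul_assoc]
    _ = R G i * (R G j * E G i) := by rw [rr_c, rr', mul_one]
    _ = R G i * R G j * E G i := by rw [mul_assoc]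
    _ = E G j * E G i := h2

end BrauerAux

open BrauerMonoid BrauerAux in
/-- Lemma 2 (additional relations, second group): for nodes `i ∼ j ∼ k` of an arbitrary
finite simple graph `M`, the relations (HTeere) and (RTerre) hold in the Brauer
monoid `BrM(M)`. -/
theorem brauer_additional_relations_triple {I : Type} [Fintype I]
    (G : SimpleGraph I) (i j k : I) (hij : G.Adj i j) (hjk : G.Adj j k) :
    E G j * E G i * R G k * E G j = E G j * R G i * E G k * E G j ∧
    E G j * R G i * R G k * E G j = E G j * E G i * E G k * E G j := by
  have hji : E G j * E G i = E G j * (R G i * R G j) := (revrre hij).symm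
  have hkj : E G k * E G j = R G j * R G k * E G j := (rre' hjk.symm).symm
  constructor
  · calc E G j * E G i * R G k * E G j
        = E G j * (R G i * R G j) * R G k * E G j := by rw [← hji]
      _ = E G j * R G i * (R G j * R G k * E G j) := by simp only [mul_assoc]
      _ = E G j * R G i * (E G k * E G j) := by rw [← hkj]
      _ = E G j * R G i * E G k * E G j := by simp only [mul_assoc]
  · calc E G j * R G i * R G k * E G j
        = E G j * (R G i * (R G j * (R G j * (R G k * E G j)))) := by
          rw [rr_c]; simp only [mul_assoc]
      _ = E G j * (R G i * R G j) * (R G j * R G k * E G j) := by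
          simp only [mul_assoc]
      _ = E G j * E G i * (E G k * E G j) := by rw [← hji, ← hkj]
      _ = E G j * E G i * E G k * E G j := by simp only [mul_assoc]
end

section
/- Let Φ be a finite simply-laced root system in a real inner product space E, let β₁, β₂, β₃ ∈ Φ be pairwise orthogonal, and let γ ∈ Φ satisfy ⟪γ, βᵢ⟫ = −1 for i = 1, 2, 3. Then the vector β₄ := 2γ + β₁ + β₂ + β₃ satisfies: (a) β₄ = r_γ(r_{β₁}(r_{β₂}(r_{β₃}(γ)))); (b) β₄ ∈ Φ; (c) ⟪β₄, βᵢ⟫ = 0 for i = 1, 2, 3; and (d) for every γ' ∈ Φ with |⟪γ', βᵢ⟫| = 1 for i = 1, 2, 3, one has |⟪β₄, γ'⟫| = 1. -/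
open scoped RealInnerProductSpace

/-- The reflection `r_α : E → E`, `r_α(x) = x − ⟪α, x⟫ α`, associated to a root `α`
(normalized so that `⟪α, α⟫ = 2`). -/
noncomputable def rootReflection {E : Type*} [NormedAddCommGroup E]
    [InnerProductSpace ℝ E] (α : E) : E → E :=
  fun x => x - ⟪α, x⟫ • α

/-- `Φ` is a finite simply-laced root system: `Φ` is finite, every root has squared
norm `2`, inner products of roots are integers, and `Φ` is closed under the
reflections `r_α` for `α ∈ Φ`. -/
def IsSimplyLacedRootSystem {E : Type*} [NormedAddCommGroup E]
    [InnerProductSpace ℝ E] (Φ : Set E) : Prop :=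
  Φ.Finite ∧
  (∀ α ∈ Φ, ⟪α, α⟫ = 2) ∧
  (∀ α ∈ Φ, ∀ β ∈ Φ, ∃ n : ℤ, ⟪α, β⟫ = (n : ℝ)) ∧
  (∀ α ∈ Φ, ∀ β ∈ Φ, β - ⟪α, β⟫ • α ∈ Φ)

/-- Lemma on quadruples of orthogonal roots: if `β₁, β₂, β₃ ∈ Φ` are pairwise orthogonal
and `γ ∈ Φ` has inner product `−1` with each of them, then
`β₄ := 2γ + β₁ + β₂ + β₃` satisfies (a) `β₄ = r_γ r_{β₁} r_{β₂} r_{β₃} γ`; (b) `β₄ ∈ Φ`;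
(c) `β₄ ⊥ βᵢ` for `i = 1, 2, 3`; (d) `|⟪β₄, γ'⟫| = 1` for every `γ' ∈ Φ` with
`|⟪γ', βᵢ⟫| = 1` for `i = 1, 2, 3`. -/
theorem root_quadruple {E : Type*} [NormedAddCommGroup E] [InnerProductSpace ℝ E]
    (Φ : Set E) (hΦ : IsSimplyLacedRootSystem Φ)
    (β₁ β₂ β₃ : E) (hβ₁ : β₁ ∈ Φ) (hβ₂ : β₂ ∈ Φ) (hβ₃ : β₃ ∈ Φ)
    (h12 : ⟪β₁, β₂⟫ = 0) (h13 : ⟪β₁, β₃⟫ = 0) (h23 : ⟪β₂, β₃⟫ = 0)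
    (γ : E) (hγ : γ ∈ Φ)
    (hγ1 : ⟪γ, β₁⟫ = -1) (hγ2 : ⟪γ, β₂⟫ = -1) (hγ3 : ⟪γ, β₃⟫ = -1) :
    (2 : ℝ) • γ + β₁ + β₂ + β₃ =
        rootReflection γ (rootReflection β₁ (rootReflection β₂ (rootReflection β₃ γ))) ∧
    (2 : ℝ) • γ + β₁ + β₂ + β₃ ∈ Φ ∧
    ⟪(2 : ℝ) • γ + β₁ + β₂ + β₃, β₁⟫ = 0 ∧
    ⟪(2 : ℝ) • γ + β₁ + β₂ + β₃, β₂⟫ = 0 ∧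
    ⟪(2 : ℝ) • γ + β₁ + β₂ + β₃, β₃⟫ = 0 ∧
    ∀ γ' ∈ Φ, |⟪γ', β₁⟫| = 1 → |⟪γ', β₂⟫| = 1 → |⟪γ', β₃⟫| = 1 →
      |⟪(2 : ℝ) • γ + β₁ + β₂ + β₃, γ'⟫| = 1 := by
  obtain ⟨hfin, hnorm, hint, hrefl⟩ := hΦ
  have h1γ : ⟪β₁, γ⟫ = -1 := by rw [real_inner_comm]; exact hγ1
  have h2γ : ⟪β₂, γ⟫ = -1 := by rw [real_inner_comm]; exact hγ2
  have h3γ : ⟪β₃, γ⟫ = -1 := by rw [real_inner_comm]; exact hγ3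
  have h21 : ⟪β₂, β₁⟫ = 0 := by rw [real_inner_comm]; exact h12
  have h31 : ⟪β₃, β₁⟫ = 0 := by rw [real_inner_comm]; exact h13
  have h32 : ⟪β₃, β₂⟫ = 0 := by rw [real_inner_comm]; exact h23
  have hγγ : ⟪γ, γ⟫ = 2 := hnorm γ hγ
  have h11 : ⟪β₁, β₁⟫ = 2 := hnorm β₁ hβ₁
  have h22 : ⟪β₂, β₂⟫ = 2 := hnorm β₂ hβ₂
  have h33 : ⟪β₃, β₃⟫ = 2 := hnorm β₃ hβ₃
  have s3 : rootReflection β₃ γ = γ + β₃ := by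
    simp only [rootReflection, h3γ]; module
  have s2 : rootReflection β₂ (γ + β₃) = γ + β₂ + β₃ := by
    simp only [rootReflection, inner_add_right, h2γ, h23]; module
  have s1 : rootReflection β₁ (γ + β₂ + β₃) = γ + β₁ + β₂ + β₃ := by
    simp only [rootReflection, inner_add_right, h1γ, h12, h13]; module
  have s0 : rootReflection γ (γ + β₁ + β₂ + β₃) = (2:ℝ) • γ + β₁ + β₂ + β₃ := by
    simp only [rootReflection, inner_add_right, hγγ, hγ1, hγ2, hγ3]; module
  have ha : (2 : ℝ) • γ + β₁ + β₂ + β₃ =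
      rootReflection γ (rootReflection β₁ (rootReflection β₂ (rootReflection β₃ γ))) := by
    rw [s3, s2, s1, s0]
  have hmem : (2 : ℝ) • γ + β₁ + β₂ + β₃ ∈ Φ := by
    have m3 : rootReflection β₃ γ ∈ Φ := hrefl β₃ hβ₃ γ hγ
    have m2 : rootReflection β₂ (rootReflection β₃ γ) ∈ Φ := hrefl β₂ hβ₂ _ m3
    have m1 : rootReflection β₁ (rootReflection β₂ (rootReflection β₃ γ)) ∈ Φ :=
      hrefl β₁ hβ₁ _ m2
    have m0 := hrefl γ hγ _ m1
    rw [ha]; exact m0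
  have hc1 : ⟪(2 : ℝ) • γ + β₁ + β₂ + β₃, β₁⟫ = 0 := by
    simp only [inner_add_left, real_inner_smul_left, hγ1, h11, h21, h31]; ring
  have hc2 : ⟪(2 : ℝ) • γ + β₁ + β₂ + β₃, β₂⟫ = 0 := by
    simp only [inner_add_left, real_inner_smul_left, hγ2, h12, h22, h32]; ring
  have hc3 : ⟪(2 : ℝ) • γ + β₁ + β₂ + β₃, β₃⟫ = 0 := by
    simp only [inner_add_left, real_inner_smul_left, hγ3, h13, h23, h33]; ring
  refine ⟨ha, hmem, hc1, hc2, hc3, ?_⟩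
  intro γ' hγ' hg1 hg2 hg3
  obtain ⟨n, hn⟩ := hint γ hγ γ' hγ'
  have hnorm4 : ⟪(2 : ℝ) • γ + β₁ + β₂ + β₃, (2 : ℝ) • γ + β₁ + β₂ + β₃⟫ = 2 :=
    hnorm _ hmem
  have hnormγ' : ⟪γ', γ'⟫ = 2 := hnorm γ' hγ'
  -- Cauchy–Schwarz bound
  have hcs : |⟪(2 : ℝ) • γ + β₁ + β₂ + β₃, γ'⟫| ≤ 2 := by
    have h := abs_real_inner_le_norm ((2 : ℝ) • γ + β₁ + β₂ + β₃) γ'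
    have e1 : ‖(2 : ℝ) • γ + β₁ + β₂ + β₃‖ = Real.sqrt 2 := by
      rw [← Real.sqrt_sq (norm_nonneg _)]
      rw [← real_inner_self_eq_norm_sq, hnorm4]
    have e2 : ‖γ'‖ = Real.sqrt 2 := by
      rw [← Real.sqrt_sq (norm_nonneg _)]
      rw [← real_inner_self_eq_norm_sq, hnormγ']
    rw [e1, e2] at h
    calc |⟪(2 : ℝ) • γ + β₁ + β₂ + β₃, γ'⟫| ≤ Real.sqrt 2 * Real.sqrt 2 := h
      _ = 2 := Real.mul_self_sqrt (by norm_num)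
  have hs1 : ⟪β₁, γ'⟫ = 1 ∨ ⟪β₁, γ'⟫ = -1 := by
    rw [real_inner_comm]; exact abs_eq (by norm_num : (0:ℝ) ≤ 1) |>.mp hg1
  have hs2 : ⟪β₂, γ'⟫ = 1 ∨ ⟪β₂, γ'⟫ = -1 := by
    rw [real_inner_comm]; exact abs_eq (by norm_num : (0:ℝ) ≤ 1) |>.mp hg2
  have hs3 : ⟪β₃, γ'⟫ = 1 ∨ ⟪β₃, γ'⟫ = -1 := by
    rw [real_inner_comm]; exact abs_eq (by norm_num : (0:ℝ) ≤ 1) |>.mp hg3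
  have key : ∃ k : ℤ, ⟪(2 : ℝ) • γ + β₁ + β₂ + β₃, γ'⟫ = (k : ℝ) ∧ Odd k := by
    rcases hs1 with e1 | e1 <;> rcases hs2 with e2 | e2 <;> rcases hs3 with e3 | e3
    · refine ⟨2*n + 3, ?_, by rw [Int.odd_iff]; omega⟩
      simp only [inner_add_left, real_inner_smul_left, hn, e1, e2, e3]
      push_cast; ring
    · refine ⟨2*n + 1, ?_, by rw [Int.odd_iff]; omega⟩
      simp only [inner_add_left, real_inner_smul_left, hn, e1, e2, e3]
      push_cast; ring
    · refine ⟨2*n + 1, ?_, by rw [Int.odd_iff]; omega⟩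
      simp only [inner_add_left, real_inner_smul_left, hn, e1, e2, e3]
      push_cast; ring
    · refine ⟨2*n - 1, ?_, by rw [Int.odd_iff]; omega⟩
      simp only [inner_add_left, real_inner_smul_left, hn, e1, e2, e3]
      push_cast; ring
    · refine ⟨2*n + 1, ?_, by rw [Int.odd_iff]; omega⟩
      simp only [inner_add_left, real_inner_smul_left, hn, e1, e2, e3]
      push_cast; ring
    · refine ⟨2*n - 1, ?_, by rw [Int.odd_iff]; omega⟩
      simp only [inner_add_left, real_inner_smul_left, hn, e1, e2, e3]
      push_cast; ring
    · refine ⟨2*n - 1, ?_, by rw [Int.odd_iff]; omega⟩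
      simp only [inner_add_left, real_inner_smul_left, hn, e1, e2, e3]
      push_cast; ring
    · refine ⟨2*n - 3, ?_, by rw [Int.odd_iff]; omega⟩
      simp only [inner_add_left, real_inner_smul_left, hn, e1, e2, e3]
      push_cast; ring
  obtain ⟨k, hk, hodd⟩ := key
  rw [hk] at hcs ⊢
  have hkb : |k| ≤ 2 := by
    have h2 := hcs; rw [← Int.cast_abs] at h2; exact_mod_cast h2
  rw [Int.odd_iff] at hodd
  obtain ⟨hl, hr⟩ := abs_le.mp hkb
  have : k = 1 ∨ k = -1 := by omega
  rcases this with h | h <;> rw [h] <;> norm_num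
end

section
/- Let Φ be a finite simply-laced root system in a real inner product space E and let β₁, β₂, β₃ ∈ Φ be pairwise orthogonal. If γ, γ' ∈ Φ satisfy |⟪γ, βᵢ⟫| = 1 and |⟪γ', βᵢ⟫| = 1 for i = 1, 2, 3, then there exists an element w of the subgroup of linear automorphisms of E generated by the reflections r_{β₁}, r_{β₂}, r_{β₃} such that γ' = w(γ) or γ' = −w(γ). -/
open scoped RealInnerProductSpace

/-- Numeric helper. -/
lemma root_orbit_unique_num (n : ℤ) (x : ℝ) (k : ℤ) (hk : Odd k)
    (hx : 2 * x = 2 * (n : ℝ) - (k : ℝ)) (hb : x * x ≤ 1 / 4) :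
    x = 1 / 2 ∨ x = -(1 / 2) := by
  have h2 : ((2 * n - k : ℤ) : ℝ) ^ 2 ≤ 1 := by push_cast; rw [← hx]; nlinarith
  have h3 : (2 * n - k) ^ 2 ≤ 1 := by exact_mod_cast h2
  have hle : 2 * n - k ≤ 1 := by nlinarith
  have hge : -1 ≤ 2 * n - k := by nlinarith
  obtain ⟨j, rfl⟩ := hk
  push_cast at hx
  have : 2 * n - (2 * j + 1) = 1 ∨ 2 * n - (2 * j + 1) = -1 := by omega
  rcases this with h | h
  · left
    have : ((2 * n - (2 * j + 1) : ℤ) : ℝ) = 1 := by rw [h]; norm_num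
    push_cast at this; linarith
  · right
    have : ((2 * n - (2 * j + 1) : ℤ) : ℝ) = -1 := by rw [h]; norm_num
    push_cast at this; linarith

/-- Existence of group elements realizing sign flips. -/
lemma root_orbit_unique_w {E : Type*} [NormedAddCommGroup E] [InnerProductSpace ℝ E]
    (β₁ β₂ β₃ γ : E)
    (h12 : ⟪β₁, β₂⟫ = 0) (h13 : ⟪β₁, β₃⟫ = 0) (h23 : ⟪β₂, β₃⟫ = 0)
    (t₁ t₂ t₃ : ℝ)
    (h1 : t₁ = 0 ∨ t₁ = ⟪β₁, γ⟫) (h2 : t₂ = 0 ∨ t₂ = ⟪β₂, γ⟫)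
    (h3 : t₃ = 0 ∨ t₃ = ⟪β₃, γ⟫) :
    ∃ w ∈ Submonoid.closure
        ({rootReflection β₁, rootReflection β₂, rootReflection β₃} :
          Set (Function.End E)),
      w γ = γ - t₁ • β₁ - t₂ • β₂ - t₃ • β₃ := by
  set S : Set (Function.End E) :=
    {rootReflection β₁, rootReflection β₂, rootReflection β₃} with hS
  have m1 : (show Function.End E from rootReflection β₁) ∈ Submonoid.closure S :=
    Submonoid.subset_closure (by rw [hS]; left; rfl)
  have m2 : (show Function.End E from rootReflection β₂) ∈ Submonoid.closure S :=
    Submonoid.subset_closure (by rw [hS]; right; left; rfl)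
  have m3 : (show Function.End E from rootReflection β₃) ∈ Submonoid.closure S :=
    Submonoid.subset_closure (by rw [hS]; right; right; rfl)
  rcases h1 with rfl | rfl <;> rcases h2 with rfl | rfl <;> rcases h3 with rfl | rfl
  · exact ⟨1, one_mem _, by show γ = _; module⟩
  · refine ⟨_, m3, ?_⟩
    show rootReflection β₃ γ = _
    simp only [rootReflection]
    module
  · refine ⟨_, m2, ?_⟩
    show rootReflection β₂ γ = _
    simp only [rootReflection]
    module
  · refine ⟨_, mul_mem m2 m3, ?_⟩
    show rootReflection β₂ (rootReflection β₃ γ) = _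
    simp only [rootReflection, inner_sub_right, inner_smul_right, h23]
    module
  · refine ⟨_, m1, ?_⟩
    show rootReflection β₁ γ = _
    simp only [rootReflection]
    module
  · refine ⟨_, mul_mem m1 m3, ?_⟩
    show rootReflection β₁ (rootReflection β₃ γ) = _
    simp only [rootReflection, inner_sub_right, inner_smul_right, h13]
    module
  · refine ⟨_, mul_mem m1 m2, ?_⟩
    show rootReflection β₁ (rootReflection β₂ γ) = _
    simp only [rootReflection, inner_sub_right, inner_smul_right, h12]
    module
  · refine ⟨_, mul_mem m1 (mul_mem m2 m3), ?_⟩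
    show rootReflection β₁ (rootReflection β₂ (rootReflection β₃ γ)) = _
    simp only [rootReflection, inner_sub_right, inner_smul_right, h12, h13, h23]
    module

/-- Lemma 1 (uniqueness up to the group generated by `r_{β₁}, r_{β₂}, r_{β₃}` and sign):
if `β₁, β₂, β₃ ∈ Φ` are pairwise orthogonal and `γ, γ' ∈ Φ` both have inner products of
absolute value `1` with each `βᵢ`, then `γ' = w(γ)` or `γ' = −w(γ)` for some `w` in the
subgroup of transformations of `E` generated by the reflections `r_{β₁}, r_{β₂}, r_{β₃}`
(each reflection is an involution, so this subgroup is the closure of the three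
reflections under composition, realized here inside the monoid `Function.End E`). -/
theorem root_orbit_unique {E : Type*} [NormedAddCommGroup E] [InnerProductSpace ℝ E]
    (Φ : Set E) (hΦ : IsSimplyLacedRootSystem Φ)
    (β₁ β₂ β₃ : E) (hβ₁ : β₁ ∈ Φ) (hβ₂ : β₂ ∈ Φ) (hβ₃ : β₃ ∈ Φ)
    (h12 : ⟪β₁, β₂⟫ = 0) (h13 : ⟪β₁, β₃⟫ = 0) (h23 : ⟪β₂, β₃⟫ = 0)
    (γ γ' : E) (hγ : γ ∈ Φ) (hγ' : γ' ∈ Φ)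
    (hγ1 : |⟪γ, β₁⟫| = 1) (hγ2 : |⟪γ, β₂⟫| = 1) (hγ3 : |⟪γ, β₃⟫| = 1)
    (hγ'1 : |⟪γ', β₁⟫| = 1) (hγ'2 : |⟪γ', β₂⟫| = 1) (hγ'3 : |⟪γ', β₃⟫| = 1) :
    ∃ w ∈ Submonoid.closure
        ({rootReflection β₁, rootReflection β₂, rootReflection β₃} :
          Set (Function.End E)),
      γ' = w γ ∨ γ' = -(w γ) := by
  obtain ⟨-, hnorm, hint, -⟩ := hΦ
  obtain ⟨n, hn⟩ := hint γ hγ γ' hγ'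
  have hγγ : ⟪γ, γ⟫ = 2 := hnorm γ hγ
  have hγ'γ' : ⟪γ', γ'⟫ = 2 := hnorm γ' hγ'
  have hb1 : ⟪β₁, β₁⟫ = 2 := hnorm β₁ hβ₁
  have hb2 : ⟪β₂, β₂⟫ = 2 := hnorm β₂ hβ₂
  have hb3 : ⟪β₃, β₃⟫ = 2 := hnorm β₃ hβ₃
  have h21 : ⟪β₂, β₁⟫ = 0 := by rw [real_inner_comm]; exact h12
  have h31 : ⟪β₃, β₁⟫ = 0 := by rw [real_inner_comm]; exact h13
  have h32 : ⟪β₃, β₂⟫ = 0 := by rw [real_inner_comm]; exact h23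
  have q1 : ⟪γ, β₁⟫ * ⟪γ, β₁⟫ = 1 := by rw [← abs_mul_abs_self, hγ1]; norm_num
  have q2 : ⟪γ, β₂⟫ * ⟪γ, β₂⟫ = 1 := by rw [← abs_mul_abs_self, hγ2]; norm_num
  have q3 : ⟪γ, β₃⟫ * ⟪γ, β₃⟫ = 1 := by rw [← abs_mul_abs_self, hγ3]; norm_num
  have p1 : ⟪γ, β₁⟫ * ⟪γ', β₁⟫ = 1 ∨ ⟪γ, β₁⟫ * ⟪γ', β₁⟫ = -1 :=
    (abs_eq (by norm_num)).mp (by rw [abs_mul, hγ1, hγ'1]; norm_num)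
  have p2 : ⟪γ, β₂⟫ * ⟪γ', β₂⟫ = 1 ∨ ⟪γ, β₂⟫ * ⟪γ', β₂⟫ = -1 :=
    (abs_eq (by norm_num)).mp (by rw [abs_mul, hγ2, hγ'2]; norm_num)
  have p3 : ⟪γ, β₃⟫ * ⟪γ', β₃⟫ = 1 ∨ ⟪γ, β₃⟫ * ⟪γ', β₃⟫ = -1 :=
    (abs_eq (by norm_num)).mp (by rw [abs_mul, hγ3, hγ'3]; norm_num)
  set c := γ - (⟪γ, β₁⟫ / 2) • β₁ - (⟪γ, β₂⟫ / 2) • β₂ - (⟪γ, β₃⟫ / 2) • β₃ with hcdef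
  set c' := γ' - (⟪γ', β₁⟫ / 2) • β₁ - (⟪γ', β₂⟫ / 2) • β₂ - (⟪γ', β₃⟫ / 2) • β₃ with hc'def
  have hcc : ⟪c, c⟫ = 1 / 2 := by
    rw [hcdef]
    simp only [inner_sub_left, inner_sub_right, real_inner_smul_left, real_inner_smul_right,
      hγγ, hb1, hb2, hb3, h12, h13, h23, h21, h31, h32,
      real_inner_comm γ β₁, real_inner_comm γ β₂, real_inner_comm γ β₃]
    linear_combination (-(1:ℝ)/2) * q1 + (-(1:ℝ)/2) * q2 + (-(1:ℝ)/2) * q3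
  have hc'c' : ⟪c', c'⟫ = 1 / 2 := by
    have q1' : ⟪γ', β₁⟫ * ⟪γ', β₁⟫ = 1 := by rw [← abs_mul_abs_self, hγ'1]; norm_num
    have q2' : ⟪γ', β₂⟫ * ⟪γ', β₂⟫ = 1 := by rw [← abs_mul_abs_self, hγ'2]; norm_num
    have q3' : ⟪γ', β₃⟫ * ⟪γ', β₃⟫ = 1 := by rw [← abs_mul_abs_self, hγ'3]; norm_num
    rw [hc'def]
    simp only [inner_sub_left, inner_sub_right, real_inner_smul_left, real_inner_smul_right,
      hγ'γ', hb1, hb2, hb3, h12, h13, h23, h21, h31, h32,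
      real_inner_comm γ' β₁, real_inner_comm γ' β₂, real_inner_comm γ' β₃]
    linear_combination (-(1:ℝ)/2) * q1' + (-(1:ℝ)/2) * q2' + (-(1:ℝ)/2) * q3'
  have hccp : 2 * ⟪c, c'⟫ =
      2 * (n : ℝ) - (⟪γ, β₁⟫ * ⟪γ', β₁⟫ + ⟪γ, β₂⟫ * ⟪γ', β₂⟫ + ⟪γ, β₃⟫ * ⟪γ', β₃⟫) := by
    rw [hcdef, hc'def]
    simp only [inner_sub_left, inner_sub_right, real_inner_smul_left, real_inner_smul_right,
      hn, hb1, hb2, hb3, h12, h13, h23, h21, h31, h32,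
      real_inner_comm γ β₁, real_inner_comm γ β₂, real_inner_comm γ β₃,
      real_inner_comm γ' β₁, real_inner_comm γ' β₂, real_inner_comm γ' β₃,
      real_inner_comm γ γ']
    ring
  have hCS : ⟪c, c'⟫ * ⟪c, c'⟫ ≤ 1 / 4 := by
    have h := real_inner_mul_inner_self_le c c'
    rw [hcc, hc'c'] at h
    linarith
  have hhalf : ⟪c, c'⟫ = 1 / 2 ∨ ⟪c, c'⟫ = -(1 / 2) := by
    rcases p1 with hp1 | hp1 <;> rcases p2 with hp2 | hp2 <;> rcases p3 with hp3 | hp3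
    · exact root_orbit_unique_num n _ 3 ⟨1, by norm_num⟩
        (by rw [hccp, hp1, hp2, hp3]; norm_num) hCS
    · exact root_orbit_unique_num n _ 1 (by norm_num)
        (by rw [hccp, hp1, hp2, hp3]; norm_num) hCS
    · exact root_orbit_unique_num n _ 1 (by norm_num)
        (by rw [hccp, hp1, hp2, hp3]; norm_num) hCS
    · exact root_orbit_unique_num n _ (-1) (by norm_num)
        (by rw [hccp, hp1, hp2, hp3]; norm_num) hCS
    · exact root_orbit_unique_num n _ 1 (by norm_num)
        (by rw [hccp, hp1, hp2, hp3]; norm_num) hCS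
    · exact root_orbit_unique_num n _ (-1) (by norm_num)
        (by rw [hccp, hp1, hp2, hp3]; norm_num) hCS
    · exact root_orbit_unique_num n _ (-1) (by norm_num)
        (by rw [hccp, hp1, hp2, hp3]; norm_num) hCS
    · exact root_orbit_unique_num n _ (-3) ⟨-2, by norm_num⟩
        (by rw [hccp, hp1, hp2, hp3]; norm_num) hCS
  rcases hhalf with hh | hh
  · -- c = c'
    have ch1 : (⟪γ, β₁⟫ - ⟪γ', β₁⟫) / 2 = 0 ∨ (⟪γ, β₁⟫ - ⟪γ', β₁⟫) / 2 = ⟪β₁, γ⟫ := by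
      rcases p1 with h | h
      · left; linear_combination (⟪γ', β₁⟫ / 2) * q1 - (⟪γ, β₁⟫ / 2) * h
      · right; rw [real_inner_comm γ β₁]
        linear_combination (⟪γ', β₁⟫ / 2) * q1 - (⟪γ, β₁⟫ / 2) * h
    have ch2 : (⟪γ, β₂⟫ - ⟪γ', β₂⟫) / 2 = 0 ∨ (⟪γ, β₂⟫ - ⟪γ', β₂⟫) / 2 = ⟪β₂, γ⟫ := by
      rcases p2 with h | h
      · left; linear_combination (⟪γ', β₂⟫ / 2) * q2 - (⟪γ, β₂⟫ / 2) * h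
      · right; rw [real_inner_comm γ β₂]
        linear_combination (⟪γ', β₂⟫ / 2) * q2 - (⟪γ, β₂⟫ / 2) * h
    have ch3 : (⟪γ, β₃⟫ - ⟪γ', β₃⟫) / 2 = 0 ∨ (⟪γ, β₃⟫ - ⟪γ', β₃⟫) / 2 = ⟪β₃, γ⟫ := by
      rcases p3 with h | h
      · left; linear_combination (⟪γ', β₃⟫ / 2) * q3 - (⟪γ, β₃⟫ / 2) * h
      · right; rw [real_inner_comm γ β₃]
        linear_combination (⟪γ', β₃⟫ / 2) * q3 - (⟪γ, β₃⟫ / 2) * h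
    have hce : c = c' := by
      have hz : ⟪c - c', c - c'⟫ = 0 := by
        have hexp : ⟪c - c', c - c'⟫ = ⟪c, c⟫ - 2 * ⟪c, c'⟫ + ⟪c', c'⟫ := by
          simp only [inner_sub_left, inner_sub_right, real_inner_comm c c']; ring
        rw [hexp, hcc, hc'c', hh]; norm_num
      exact sub_eq_zero.mp (inner_self_eq_zero.mp hz)
    obtain ⟨w, hwm, hwγ⟩ := root_orbit_unique_w β₁ β₂ β₃ γ h12 h13 h23 _ _ _ ch1 ch2 ch3
    refine ⟨w, hwm, Or.inl ?_⟩
    rw [hwγ]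
    rw [hcdef, hc'def] at hce
    linear_combination (norm := module) -hce
  · -- c = -c'
    have ch1 : (⟪γ, β₁⟫ + ⟪γ', β₁⟫) / 2 = 0 ∨ (⟪γ, β₁⟫ + ⟪γ', β₁⟫) / 2 = ⟪β₁, γ⟫ := by
      rcases p1 with h | h
      · right; rw [real_inner_comm γ β₁]
        linear_combination (⟪γ, β₁⟫ / 2) * h - (⟪γ', β₁⟫ / 2) * q1
      · left; linear_combination (⟪γ, β₁⟫ / 2) * h - (⟪γ', β₁⟫ / 2) * q1
    have ch2 : (⟪γ, β₂⟫ + ⟪γ', β₂⟫) / 2 = 0 ∨ (⟪γ, β₂⟫ + ⟪γ', β₂⟫) / 2 = ⟪β₂, γ⟫ := by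
      rcases p2 with h | h
      · right; rw [real_inner_comm γ β₂]
        linear_combination (⟪γ, β₂⟫ / 2) * h - (⟪γ', β₂⟫ / 2) * q2
      · left; linear_combination (⟪γ, β₂⟫ / 2) * h - (⟪γ', β₂⟫ / 2) * q2
    have ch3 : (⟪γ, β₃⟫ + ⟪γ', β₃⟫) / 2 = 0 ∨ (⟪γ, β₃⟫ + ⟪γ', β₃⟫) / 2 = ⟪β₃, γ⟫ := by
      rcases p3 with h | h
      · right; rw [real_inner_comm γ β₃]
        linear_combination (⟪γ, β₃⟫ / 2) * h - (⟪γ', β₃⟫ / 2) * q3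
      · left; linear_combination (⟪γ, β₃⟫ / 2) * h - (⟪γ', β₃⟫ / 2) * q3
    have hce : c = -c' := by
      have hz : ⟪c + c', c + c'⟫ = 0 := by
        have hexp : ⟪c + c', c + c'⟫ = ⟪c, c⟫ + 2 * ⟪c, c'⟫ + ⟪c', c'⟫ := by
          simp only [inner_add_left, inner_add_right, real_inner_comm c c']; ring
        rw [hexp, hcc, hc'c', hh]; norm_num
      have h0 := inner_self_eq_zero.mp hz
      exact eq_neg_of_add_eq_zero_left h0
    obtain ⟨w, hwm, hwγ⟩ := root_orbit_unique_w β₁ β₂ β₃ γ h12 h13 h23 _ _ _ ch1 ch2 ch3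
    refine ⟨w, hwm, Or.inr ?_⟩
    rw [hwγ]
    rw [hcdef, hc'def] at hce
    linear_combination (norm := module) hce
end

section
/- Let Φ be a finite simply-laced root system in a real inner product space E with a positive system Φ⁺. Let X ⊆ Φ⁺ be a set of pairwise orthogonal roots and let Y be the admissible closure of X, i.e., Y is admissible, X ⊆ Y, and Y ⊆ Z for every admissible set Z with X ⊆ Z. If γ ∈ Φ⁺ satisfies ⟪γ, x⟫ = 0 for all x ∈ X, then either γ ∈ Y or ⟪γ, y⟫ = 0 for all y ∈ Y. -/
open scoped RealInnerProductSpace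

/-- `Pos` is a positive system for `Φ`: `Φ` is the disjoint union of `Pos` and `−Pos`. -/
def IsPositiveSystem {E : Type*} [NormedAddCommGroup E] [InnerProductSpace ℝ E]
    (Φ Pos : Set E) : Prop :=
  Pos ⊆ Φ ∧ (∀ α ∈ Φ, α ∈ Pos ∨ -α ∈ Pos) ∧ (∀ α, α ∈ Pos → -α ∉ Pos)

/-- A subset `X ⊆ Φ⁺` is admissible if its elements are pairwise orthogonal and, for all
distinct `β₁, β₂, β₃ ∈ X` and every `α ∈ Φ` with `|⟪α, βᵢ⟫| = 1` for `i = 1, 2, 3`, the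
unique positive root among `±r_α r_{β₁} r_{β₂} r_{β₃} α` belongs to `X`. -/
def IsAdmissible {E : Type*} [NormedAddCommGroup E] [InnerProductSpace ℝ E]
    (Φ Pos X : Set E) : Prop :=
  X ⊆ Pos ∧
  (∀ β ∈ X, ∀ γ ∈ X, β ≠ γ → ⟪β, γ⟫ = 0) ∧
  (∀ β₁ ∈ X, ∀ β₂ ∈ X, ∀ β₃ ∈ X, β₁ ≠ β₂ → β₁ ≠ β₃ → β₂ ≠ β₃ →
    ∀ α ∈ Φ, |⟪α, β₁⟫| = 1 → |⟪α, β₂⟫| = 1 → |⟪α, β₃⟫| = 1 →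
    ∀ ζ ∈ Pos,
      (ζ = rootReflection α (rootReflection β₁ (rootReflection β₂ (rootReflection β₃ α))) ∨
       ζ = -rootReflection α (rootReflection β₁ (rootReflection β₂ (rootReflection β₃ α)))) →
      ζ ∈ X)

theorem key {E : Type*} [NormedAddCommGroup E] [InnerProductSpace ℝ E]
    (γ α β₁ β₂ β₃ : E)
    (hαα : ⟪α, α⟫ = 2)
    (h12 : ⟪β₁, β₂⟫ = 0) (h13 : ⟪β₁, β₃⟫ = 0) (h23 : ⟪β₂, β₃⟫ = 0)
    (c1 : |⟪α, β₁⟫| = 1) (c2 : |⟪α, β₂⟫| = 1) (c3 : |⟪α, β₃⟫| = 1)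
    (g1 : ⟪γ, β₁⟫ = 0) (g2 : ⟪γ, β₂⟫ = 0) (g3 : ⟪γ, β₃⟫ = 0) :
    ⟪γ, rootReflection α (rootReflection β₁ (rootReflection β₂ (rootReflection β₃ α)))⟫
      = 2 * ⟪γ, α⟫ := by
  have h21 : ⟪β₂, β₁⟫ = 0 := (real_inner_comm β₁ β₂).trans h12
  have h31 : ⟪β₃, β₁⟫ = 0 := (real_inner_comm β₁ β₃).trans h13
  have h32 : ⟪β₃, β₂⟫ = 0 := (real_inner_comm β₂ β₃).trans h23
  have m1 : ⟪α, β₁⟫ = ⟪β₁, α⟫ := real_inner_comm β₁ α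
  have m2 : ⟪α, β₂⟫ = ⟪β₂, α⟫ := real_inner_comm β₂ α
  have m3 : ⟪α, β₃⟫ = ⟪β₃, α⟫ := real_inner_comm β₃ α
  have t1 : ⟪β₁, α⟫ * ⟪β₁, α⟫ = 1 := by
    rw [real_inner_comm, ← sq, ← sq_abs, c1]; norm_num
  have t2 : ⟪β₂, α⟫ * ⟪β₂, α⟫ = 1 := by
    rw [real_inner_comm, ← sq, ← sq_abs, c2]; norm_num
  have t3 : ⟪β₃, α⟫ * ⟪β₃, α⟫ = 1 := by
    rw [real_inner_comm, ← sq, ← sq_abs, c3]; norm_num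
  simp only [rootReflection, inner_sub_right, real_inner_smul_right,
    h12, h13, h23, h21, h31, h32, hαα, g1, g2, g3]
  linear_combination (⟪γ,α⟫) * t1 + (⟪γ,α⟫) * t2 + (⟪γ,α⟫) * t3
    + (⟪γ,α⟫ * ⟪β₁,α⟫) * m1 + (⟪γ,α⟫ * ⟪β₂,α⟫) * m2 + (⟪γ,α⟫ * ⟪β₃,α⟫) * m3

/-- Lemma (admissible closure, part (ii)): if `X ⊆ Φ⁺` consists of pairwise orthogonal
roots, `Y` is the admissible closure of `X`, and `γ ∈ Φ⁺` is orthogonal to every element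
of `X`, then `γ ∈ Y` or `γ` is orthogonal to every element of `Y`. -/
theorem admissibleClosure_orthogonal {E : Type*} [NormedAddCommGroup E]
    [InnerProductSpace ℝ E] (Φ Pos : Set E)
    (hΦ : IsSimplyLacedRootSystem Φ) (hPos : IsPositiveSystem Φ Pos)
    (X : Set E) (hXPos : X ⊆ Pos) (hXorth : ∀ β ∈ X, ∀ γ ∈ X, β ≠ γ → ⟪β, γ⟫ = 0)
    (Y : Set E) (hYadm : IsAdmissible Φ Pos Y) (hXY : X ⊆ Y)
    (hYmin : ∀ Z : Set E, IsAdmissible Φ Pos Z → X ⊆ Z → Y ⊆ Z)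
    (γ : E) (hγ : γ ∈ Pos) (hγX : ∀ x ∈ X, ⟪γ, x⟫ = 0) :
    γ ∈ Y ∨ ∀ y ∈ Y, ⟪γ, y⟫ = 0 := by
  by_cases hmem : γ ∈ Y
  · exact Or.inl hmem
  right
  obtain ⟨hΦfin, hnorm, hint, hrefl⟩ := hΦ
  obtain ⟨hPosΦ, htot, hdisj⟩ := hPos
  obtain ⟨hYPos, hYorth, hYclos⟩ := hYadm
  have hγΦ : γ ∈ Φ := hPosΦ hγ
  have hγγ : ⟪γ, γ⟫ = 2 := hnorm γ hγΦ
  set Z : Set E := {y ∈ Y | ⟪γ, y⟫ = 0} with hZdef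
  have hZadm : IsAdmissible Φ Pos Z := by
    refine ⟨fun y hy => hYPos hy.1, fun β hβ δ hδ h => hYorth β hβ.1 δ hδ.1 h, ?_⟩
    intro β₁ hβ₁ β₂ hβ₂ β₃ hβ₃ h12 h13 h23 α hα ha1 ha2 ha3 ζ hζ hζeq
    have hζY : ζ ∈ Y :=
      hYclos β₁ hβ₁.1 β₂ hβ₂.1 β₃ hβ₃.1 h12 h13 h23 α hα ha1 ha2 ha3 ζ hζ hζeq
    refine ⟨hζY, ?_⟩
    -- ⟪γ, w⟫ = 2 ⟪γ, α⟫
    have hw := key γ α β₁ β₂ β₃ (hnorm α hα)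
      (hYorth β₁ hβ₁.1 β₂ hβ₂.1 h12) (hYorth β₁ hβ₁.1 β₃ hβ₃.1 h13)
      (hYorth β₂ hβ₂.1 β₃ hβ₃.1 h23) ha1 ha2 ha3 hβ₁.2 hβ₂.2 hβ₃.2
    have hζΦ : ζ ∈ Φ := hPosΦ hζ
    have hζζ : ⟪ζ, ζ⟫ = 2 := hnorm ζ hζΦ
    obtain ⟨n, hn⟩ := hint γ hγΦ α hα
    have hζv : ⟪γ, ζ⟫ = 2 * ⟪γ, α⟫ ∨ ⟪γ, ζ⟫ = -(2 * ⟪γ, α⟫) := by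
      rcases hζeq with h | h
      · left; rw [h, hw]
      · right; rw [h, inner_neg_right, hw]
    obtain ⟨m, hm⟩ : ∃ m : ℤ, ⟪γ, ζ⟫ = 2 * (m : ℝ) := by
      rcases hζv with h | h
      · exact ⟨n, by rw [h, hn]⟩
      · exact ⟨-n, by rw [h, hn]; push_cast; ring⟩
    have e1 : ⟪γ - ζ, γ - ζ⟫ = 4 - 2 * ⟪γ, ζ⟫ := by
      rw [real_inner_sub_sub_self, hγγ, hζζ]; ring
    have e2 : ⟪γ + ζ, γ + ζ⟫ = 4 + 2 * ⟪γ, ζ⟫ := by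
      rw [real_inner_add_add_self, hγγ, hζζ]; ring
    have hub : ⟪γ, ζ⟫ ≤ 2 := by nlinarith [real_inner_self_nonneg (x := γ - ζ)]
    have hlb : -2 ≤ ⟪γ, ζ⟫ := by nlinarith [real_inner_self_nonneg (x := γ + ζ)]
    have hmr : (-1 : ℝ) ≤ (m : ℝ) ∧ (m : ℝ) ≤ 1 := by
      constructor <;> nlinarith [hm ▸ hlb, hm ▸ hub]
    have hm1 : (-1 : ℤ) ≤ m := by exact_mod_cast hmr.1
    have hm2 : m ≤ 1 := by exact_mod_cast hmr.2
    interval_cases m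
    · -- m = -1 : γ = -ζ
      exfalso
      have h0 : ⟪γ + ζ, γ + ζ⟫ = 0 := by rw [e2, hm]; norm_num
      have hadd : ζ + γ = 0 := by rw [add_comm]; exact inner_self_eq_zero.mp h0
      have hζγ : ζ = -γ := add_eq_zero_iff_eq_neg.mp hadd
      exact hdisj γ hγ (hζγ ▸ hζ)
    · -- m = 0
      simpa using hm
    · -- m = 1 : γ = ζ
      exfalso
      have h0 : ⟪γ - ζ, γ - ζ⟫ = 0 := by rw [e1, hm]; norm_num
      have hγζ : γ = ζ := sub_eq_zero.mp (inner_self_eq_zero.mp h0)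
      exact hmem (hγζ ▸ hζY)
  have hsub : Y ⊆ Z := hYmin Z hZadm (fun x hx => ⟨hXY hx, hγX x hx⟩)
  exact fun y hy => (hsub hy).2
end

section
/- Let Φ be a finite simply-laced root system in a real inner product space E with a positive system Φ⁺. Let B ⊆ Φ⁺ be admissible, let α ∈ Φ, and let β, γ ∈ B satisfy ⟪α, β⟫ ≠ 0 and ⟪α, γ⟫ ≠ 0. Then the positive normalizations of the images of B under r_β ∘ r_α and under r_γ ∘ r_α coincide: ((r_β ∘ r_α)(B))⁺ = ((r_γ ∘ r_α)(B))⁺, where for S ⊆ E one writes S⁺ = {β ∈ Φ⁺ : β ∈ S or −β ∈ S}. -/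
open scoped RealInnerProductSpace

/-- The positive normalization `S⁺ = {β ∈ Φ⁺ : β ∈ S or −β ∈ S}` of a subset `S ⊆ E`. -/
def posPart {E : Type*} [NormedAddCommGroup E] [InnerProductSpace ℝ E]
    (Pos S : Set E) : Set E :=
  {β | β ∈ Pos ∧ (β ∈ S ∨ -β ∈ S)}

section Aux

variable {E : Type*} [NormedAddCommGroup E] [InnerProductSpace ℝ E]

lemma pick_aux {S : Set E} {g : E → E} {δ' p q : E} (hδ' : δ' ∈ S)
    (ht : g δ' = q ∨ g δ' = -q) (hp : p = q ∨ p = -q) :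
    p ∈ g '' S ∨ -p ∈ g '' S := by
  rcases ht with ht | ht <;> rcases hp with hp | hp
  · exact Or.inl ⟨δ', hδ', by rw [ht, hp]⟩
  · exact Or.inr ⟨δ', hδ', by rw [ht, hp, neg_neg]⟩
  · exact Or.inr ⟨δ', hδ', by rw [ht, hp]⟩
  · exact Or.inl ⟨δ', hδ', by rw [ht, hp]⟩

lemma posPart_incl (Φ Pos : Set E)
    (hΦ : IsSimplyLacedRootSystem Φ) (hPos : IsPositiveSystem Φ Pos)
    (B : Set E) (hB : IsAdmissible Φ Pos B)
    (α : E) (hα : α ∈ Φ) (β γ : E) (hβ : β ∈ B) (hγ : γ ∈ B)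
    (hαβ : ⟪α, β⟫ ≠ 0) (hαγ : ⟪α, γ⟫ ≠ 0) (hbg : β ≠ γ) :
    posPart Pos ((rootReflection β ∘ rootReflection α) '' B) ⊆
      posPart Pos ((rootReflection γ ∘ rootReflection α) '' B) := by
  obtain ⟨hfin, hnorm, hint, hcl⟩ := hΦ
  obtain ⟨hPΦ, hdich, hdisj⟩ := hPos
  obtain ⟨hBP, horth, hadm⟩ := hB
  have hβΦ : β ∈ Φ := hPΦ (hBP hβ)
  have hγΦ : γ ∈ Φ := hPΦ (hBP hγ)
  have haa : ⟪α, α⟫ = 2 := hnorm α hα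
  have hbb : ⟪β, β⟫ = 2 := hnorm β hβΦ
  have hgg : ⟪γ, γ⟫ = 2 := hnorm γ hγΦ
  have hbg0 : ⟪β, γ⟫ = 0 := horth β hβ γ hγ hbg
  have hgb0 : ⟪γ, β⟫ = 0 := by rw [real_inner_comm]; exact hbg0
  -- inner products of α with elements of B are in {-1,0,1}
  have key : ∀ δ ∈ B, ⟪α, δ⟫ = -1 ∨ ⟪α, δ⟫ = 0 ∨ ⟪α, δ⟫ = 1 := by
    intro δ hδ
    have hδΦ : δ ∈ Φ := hPΦ (hBP hδ)
    obtain ⟨n, hn⟩ := hint α hα δ hδΦ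
    have hdd : ⟪δ, δ⟫ = 2 := hnorm δ hδΦ
    have hda' : ⟪δ, α⟫ = (n : ℝ) := by rw [real_inner_comm α δ]; exact hn
    have e1 : ⟪α - δ, α - δ⟫ = 4 - 2 * (n : ℝ) := by
      rw [inner_sub_left, inner_sub_right, inner_sub_right, haa, hdd, hda', hn]; ring
    have e2 : ⟪α + δ, α + δ⟫ = 4 + 2 * (n : ℝ) := by
      rw [inner_add_left, inner_add_right, inner_add_right, haa, hdd, hda', hn]; ring
    have p1 : (0:ℝ) ≤ ⟪α - δ, α - δ⟫ := real_inner_self_nonneg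
    have p2 : (0:ℝ) ≤ ⟪α + δ, α + δ⟫ := real_inner_self_nonneg
    have hle : n ≤ 2 := by
      have : (n:ℝ) ≤ 2 := by rw [e1] at p1; linarith
      exact_mod_cast this
    have hge : -2 ≤ n := by
      have : (-2:ℝ) ≤ n := by rw [e2] at p2; linarith
      exact_mod_cast this
    interval_cases n
    · exfalso
      have hz : ⟪α + δ, α + δ⟫ = 0 := by rw [e2]; norm_num
      have hαδ : α = -δ := by
        have h0 : α + δ = 0 := inner_self_eq_zero.mp hz
        exact eq_neg_of_add_eq_zero_left h0
      by_cases hh : δ = β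
      · exact hαγ (by rw [hαδ, hh, inner_neg_left, hbg0, neg_zero])
      · exact hαβ (by rw [hαδ, inner_neg_left, horth δ hδ β hβ hh, neg_zero])
    · norm_num [hn]
    · norm_num [hn]
    · norm_num [hn]
    · exfalso
      have hz : ⟪α - δ, α - δ⟫ = 0 := by rw [e1]; norm_num
      have hαδ : α = δ := sub_eq_zero.mp (inner_self_eq_zero.mp hz)
      by_cases hh : δ = β
      · exact hαγ (by rw [hαδ, hh, hbg0])
      · exact hαβ (by rw [hαδ, horth δ hδ β hβ hh])
  have hab2 : ⟪α, β⟫ = -1 ∨ ⟪α, β⟫ = 1 := by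
    rcases key β hβ with h | h | h
    exacts [Or.inl h, absurd h hαβ, Or.inr h]
  have hag2 : ⟪α, γ⟫ = -1 ∨ ⟪α, γ⟫ = 1 := by
    rcases key γ hγ with h | h | h
    exacts [Or.inl h, absurd h hαγ, Or.inr h]
  intro p hp
  obtain ⟨hpP, him⟩ := hp
  have hex : ∃ δ ∈ B, p = (rootReflection β ∘ rootReflection α) δ ∨
      p = -((rootReflection β ∘ rootReflection α) δ) := by
    rcases him with ⟨δ, hδ, hδe⟩ | ⟨δ, hδ, hδe⟩
    · exact ⟨δ, hδ, Or.inl hδe.symm⟩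
    · exact ⟨δ, hδ, Or.inr (by rw [hδe, neg_neg])⟩
  obtain ⟨δ, hδB, hpδ⟩ := hex
  refine ⟨hpP, ?_⟩
  have hba : ⟪β, α⟫ = ⟪α, β⟫ := real_inner_comm α β
  have hga : ⟪γ, α⟫ = ⟪α, γ⟫ := real_inner_comm α γ
  by_cases hδβ : δ = β
  · -- case A: δ = β; use witness γ
    subst hδβ
    refine pick_aux hγ ?_ hpδ
    rcases hab2 with hab | hab <;> rcases hag2 with hag | hag <;>
      [skip; skip; skip; skip] <;>
    first
    | (left
       simp only [Function.comp_apply, rootReflection, inner_sub_right, inner_smul_right,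
         haa, hbb, hgg, hbg0, hgb0, hab, hag, hba, hga]
       all_goals module)
    | (right
       simp only [Function.comp_apply, rootReflection, inner_sub_right, inner_smul_right,
         inner_neg_right, haa, hbb, hgg, hbg0, hgb0, hab, hag, hba, hga]
       all_goals module)
  · by_cases hδγ : δ = γ
    · -- case B: δ = γ; use witness β
      subst hδγ
      refine pick_aux hβ ?_ hpδ
      rcases hab2 with hab | hab <;> rcases hag2 with hag | hag <;>
        [skip; skip; skip; skip] <;>
      first
      | (left
         simp only [Function.comp_apply, rootReflection, inner_sub_right, inner_smul_right,
           haa, hbb, hgg, hbg0, hgb0, hab, hag, hba, hga]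
         all_goals module)
      | (right
         simp only [Function.comp_apply, rootReflection, inner_sub_right, inner_smul_right,
           inner_neg_right, haa, hbb, hgg, hbg0, hgb0, hab, hag, hba, hga]
         all_goals module)
    · have hδΦ : δ ∈ Φ := hPΦ (hBP hδB)
      have hdd : ⟪δ, δ⟫ = 2 := hnorm δ hδΦ
      have hbd0 : ⟪β, δ⟫ = 0 := horth β hβ δ hδB (Ne.symm hδβ)
      have hdb0 : ⟪δ, β⟫ = 0 := by rw [real_inner_comm]; exact hbd0
      have hgd0 : ⟪γ, δ⟫ = 0 := horth γ hγ δ hδB (Ne.symm hδγ)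
      have hdg0 : ⟪δ, γ⟫ = 0 := by rw [real_inner_comm]; exact hgd0
      have hda : ⟪δ, α⟫ = ⟪α, δ⟫ := real_inner_comm α δ
      rcases key δ hδB with had | had | had
      rotate_left
      · -- case C : orthogonal, witness δ itself
        refine pick_aux hδB (Or.inl ?_) hpδ
        simp only [Function.comp_apply, rootReflection, inner_sub_right, inner_smul_right,
          had, hbd0, hgd0, hda]
        all_goals module
      all_goals (
        -- case D : had : ⟪α,δ⟫ = ±1
        set x := rootReflection α (rootReflection β (rootReflection γ (rootReflection δ α))) with hxdef
        have hxΦ : x ∈ Φ := by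
          have h1 : rootReflection δ α ∈ Φ := hcl δ hδΦ α hα
          have h2 : rootReflection γ (rootReflection δ α) ∈ Φ := hcl γ hγΦ _ h1
          have h3 : rootReflection β (rootReflection γ (rootReflection δ α)) ∈ Φ :=
            hcl β hβΦ _ h2
          exact hcl α hα _ h3
        have hx : x = (2:ℝ) • α - ⟪α,β⟫ • β - ⟪α,γ⟫ • γ - ⟪α,δ⟫ • δ := by
          rcases hab2 with hab | hab <;> rcases hag2 with hag | hag <;>
          · simp only [hxdef, rootReflection, inner_sub_right, inner_smul_right,
              haa, hbb, hgg, hdd, hbg0, hgb0, hbd0, hdb0, hgd0, hdg0, hab, hag, had,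
              hba, hga, hda]
            all_goals module
        obtain ⟨s, hs, hsP⟩ : ∃ s : ℝ, (s = 1 ∨ s = -1) ∧ s • x ∈ Pos := by
          rcases hdich x hxΦ with h | h
          · exact ⟨1, Or.inl rfl, by simpa using h⟩
          · exact ⟨-1, Or.inr rfl, by simpa [neg_smul] using h⟩
        have hor : s • x = x ∨ s • x = -x := by
          rcases hs with h | h <;> simp [h]
        have hζB : s • x ∈ B := by
          refine hadm β hβ γ hγ δ hδB hbg (Ne.symm hδβ) (Ne.symm hδγ) α hα ?_ ?_ ?_
            (s • x) hsP hor
          · rcases hab2 with h | h <;> rw [h] <;> norm_num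
          · rcases hag2 with h | h <;> rw [h] <;> norm_num
          · rw [had] <;> norm_num
        refine pick_aux hζB ?_ hpδ
        rcases hs with hsv | hsv <;> subst hsv <;>
          rcases hab2 with hab | hab <;> rcases hag2 with hag | hag <;>
        first
        | (left
           rw [hx]
           simp only [Function.comp_apply, rootReflection, inner_sub_right, inner_smul_right,
             inner_add_right, inner_neg_right, one_smul, neg_smul,
             haa, hbb, hgg, hdd, hbg0, hgb0, hbd0, hdb0, hgd0, hdg0, hab, hag, had,
             hba, hga, hda]
           all_goals module)
        | (right
           rw [hx]
           simp only [Function.comp_apply, rootReflection, inner_sub_right, inner_smul_right,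
             inner_add_right, inner_neg_right, one_smul, neg_smul,
             haa, hbb, hgg, hdd, hbg0, hgb0, hbd0, hdb0, hgd0, hdg0, hab, hag, had,
             hba, hga, hda]
           all_goals module))

end Aux

/-- Well-definedness of the `e_α` action on admissible sets: if `B` is admissible,
`α ∈ Φ`, and `β, γ ∈ B` are both non-orthogonal to `α`, then the positive normalizations
of the images of `B` under `r_β ∘ r_α` and under `r_γ ∘ r_α` coincide. -/
theorem admissible_action_welldefined {E : Type*} [NormedAddCommGroup E]
    [InnerProductSpace ℝ E] (Φ Pos : Set E)
    (hΦ : IsSimplyLacedRootSystem Φ) (hPos : IsPositiveSystem Φ Pos)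
    (B : Set E) (hB : IsAdmissible Φ Pos B)
    (α : E) (hα : α ∈ Φ) (β γ : E) (hβ : β ∈ B) (hγ : γ ∈ B)
    (hαβ : ⟪α, β⟫ ≠ 0) (hαγ : ⟪α, γ⟫ ≠ 0) :
    posPart Pos ((rootReflection β ∘ rootReflection α) '' B) =
      posPart Pos ((rootReflection γ ∘ rootReflection α) '' B) := by
  by_cases hbg : β = γ
  · rw [hbg]
  · exact Set.Subset.antisymm
      (posPart_incl Φ Pos ⟨hΦ.1, hΦ.2.1, hΦ.2.2.1, hΦ.2.2.2⟩ hPos B hB α hα β γ hβ hγ hαβ hαγ hbg)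
      (posPart_incl Φ Pos ⟨hΦ.1, hΦ.2.1, hΦ.2.2.1, hΦ.2.2.2⟩ hPos B hB α hα γ β hγ hβ hαγ hαβ
        (Ne.symm hbg))
end

section
/- Let Φ be a finite simply-laced root system in a real inner product space E with a positive system Φ⁺, and let w : E → E be a composition of reflections r_α with α ∈ Φ (an element of the Weyl group). Let X ⊆ Φ⁺ be a set of pairwise orthogonal roots and let Y be the admissible closure of X (Y is admissible, X ⊆ Y, and Y ⊆ Z for every admissible Z with X ⊆ Z). Then (w(Y))⁺ is the admissible closure of (w(X))⁺: it is admissible, contains (w(X))⁺, and is contained in every admissible set containing (w(X))⁺. Here S⁺ = {β ∈ Φ⁺ : β ∈ S or −β ∈ S} for S ⊆ E. -/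
open scoped RealInnerProductSpace

section AuxLemmas

variable {E : Type*} [NormedAddCommGroup E] [InnerProductSpace ℝ E]

lemma rr_inner {α : E} (hα : ⟪α, α⟫ = (2:ℝ)) (x y : E) :
    ⟪rootReflection α x, rootReflection α y⟫ = ⟪x, y⟫ := by
  simp only [rootReflection, inner_sub_left, inner_sub_right, real_inner_smul_left,
    real_inner_smul_right, hα, real_inner_comm x α]
  ring

lemma rr_invol {α : E} (hα : ⟪α, α⟫ = (2:ℝ)) (x : E) :
    rootReflection α (rootReflection α x) = x := by
  simp only [rootReflection, inner_sub_right, real_inner_smul_right, hα]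
  module

lemma rr_neg_arg (α x : E) : rootReflection α (-x) = -rootReflection α x := by
  simp only [rootReflection, inner_neg_right]
  module

lemma rr_neg_root (α x : E) : rootReflection (-α) x = rootReflection α x := by
  simp only [rootReflection, inner_neg_left]
  module

lemma rr_conj {α : E} (hα : ⟪α, α⟫ = (2:ℝ)) (z x : E) :
    rootReflection (rootReflection α z) x
      = rootReflection α (rootReflection z (rootReflection α x)) := by
  simp only [rootReflection, inner_sub_left, inner_sub_right, real_inner_smul_left,
    real_inner_smul_right, hα, real_inner_comm z α, real_inner_comm x α, smul_sub, sub_smul,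
    smul_smul]
  module

/-- `w` and `w'` are mutually inverse elements of the Weyl group, adapted to `Φ`. -/
def WeylPairAux (Φ : Set E) (w w' : E → E) : Prop :=
  (∀ x, w' (w x) = x) ∧ (∀ x, w (w' x) = x) ∧
  (∀ x y, ⟪w x, w y⟫ = ⟪x, y⟫) ∧
  (∀ x, w (-x) = - w x) ∧
  (∀ x ∈ Φ, w x ∈ Φ) ∧ (∀ x ∈ Φ, w' x ∈ Φ) ∧
  (∀ z x, rootReflection (w z) x = w (rootReflection z (w' x)))

lemma rr_memΦ {Φ : Set E} (hΦ : IsSimplyLacedRootSystem Φ) {a b : E}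
    (ha : a ∈ Φ) (hb : b ∈ Φ) : rootReflection a b ∈ Φ := by
  simpa [rootReflection] using hΦ.2.2.2 a ha b hb

lemma weylPair_foldr {Φ : Set E} (hΦ : IsSimplyLacedRootSystem Φ)
    (l : List E) (hl : ∀ α ∈ l, α ∈ Φ) :
    ∃ w', WeylPairAux Φ ((l.map rootReflection).foldr (· ∘ ·) id) w' ∧
          WeylPairAux Φ w' ((l.map rootReflection).foldr (· ∘ ·) id) := by
  induction l with
  | nil =>
    exact ⟨id, ⟨fun x => rfl, fun x => rfl, fun x y => rfl, fun x => rfl,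
      fun x h => h, fun x h => h, fun z x => rfl⟩,
      ⟨fun x => rfl, fun x => rfl, fun x y => rfl, fun x => rfl,
      fun x h => h, fun x h => h, fun z x => rfl⟩⟩
  | cons α t ih =>
    have hαΦ : α ∈ Φ := hl α List.mem_cons_self
    have hα2 : ⟪α, α⟫ = (2:ℝ) := hΦ.2.1 α hαΦ
    obtain ⟨v', ⟨hvi, hvi', hvinn, hvneg, hvΦ, hv'Φ, hvconj⟩,
      ⟨_, _, hv'inn, hv'neg, _, _, hv'conj⟩⟩ := ih (fun β hβ => hl β (List.mem_cons_of_mem α hβ))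
    set v : E → E := ((t.map rootReflection).foldr (· ∘ ·) id) with hv
    have hfold : (((α :: t).map rootReflection).foldr (· ∘ ·) id) = rootReflection α ∘ v := rfl
    rw [hfold]
    refine ⟨v' ∘ rootReflection α, ⟨?_, ?_, ?_, ?_, ?_, ?_, ?_⟩, ⟨?_, ?_, ?_, ?_, ?_, ?_, ?_⟩⟩
    · intro x; simp only [Function.comp_apply, rr_invol hα2, hvi]
    · intro x; simp only [Function.comp_apply, hvi', rr_invol hα2]
    · intro x y; simp only [Function.comp_apply, rr_inner hα2, hvinn]
    · intro x; simp only [Function.comp_apply, hvneg, rr_neg_arg]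
    · intro x hx; exact rr_memΦ hΦ hαΦ (hvΦ x hx)
    · intro x hx; exact hv'Φ _ (rr_memΦ hΦ hαΦ hx)
    · intro z x
      simp only [Function.comp_apply]
      rw [rr_conj hα2, hvconj]
    · intro x; simp only [Function.comp_apply, hvi', rr_invol hα2]
    · intro x; simp only [Function.comp_apply, rr_invol hα2, hvi]
    · intro x y; rw [show ⟪x, y⟫ = ⟪rootReflection α (v ((v' ∘ rootReflection α) x)),
        rootReflection α (v ((v' ∘ rootReflection α) y))⟫ by
          simp only [Function.comp_apply, hvi', rr_invol hα2]]
      simp only [Function.comp_apply, rr_inner hα2, hvinn]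
    · intro x; simp only [Function.comp_apply, rr_neg_arg, hv'neg]
    · intro x hx; exact hv'Φ _ (rr_memΦ hΦ hαΦ hx)
    · intro x hx; exact rr_memΦ hΦ hαΦ (hvΦ x hx)
    · intro z x
      simp only [Function.comp_apply]
      rw [hv'conj, rr_conj hα2]

lemma admissible_posPart_image {Φ Pos : Set E} (hΦ : IsSimplyLacedRootSystem Φ)
    (hPos : IsPositiveSystem Φ Pos) {w w' : E → E} (hW : WeylPairAux Φ w w')
    {Z : Set E} (hZ : IsAdmissible Φ Pos Z) :
    IsAdmissible Φ Pos (posPart Pos (w '' Z)) := by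
  obtain ⟨hwi, hwi', hinn, hneg, hmapΦ, hmapΦ', hconj⟩ := hW
  have mem_struct : ∀ β ∈ posPart Pos (w '' Z), ∃ z ∈ Z, β = w z ∨ β = - w z := by
    rintro β ⟨hβPos, (⟨z, hz, rfl⟩ | ⟨z, hz, hzb⟩)⟩
    · exact ⟨z, hz, Or.inl rfl⟩
    · exact ⟨z, hz, Or.inr (by rw [hzb, neg_neg])⟩
  have hzΦ : ∀ z ∈ Z, z ∈ Φ := fun z hz => hPos.1 (hZ.1 hz)
  -- two elements of the positive part coming from the same `z` are equal
  have eq_of : ∀ {β γ : E}, β ∈ Pos → γ ∈ Pos → ∀ {z : E},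
      (β = w z ∨ β = - w z) → (γ = w z ∨ γ = - w z) → β = γ := by
    rintro β γ hβ hγ z (rfl | rfl) (rfl | rfl)
    · rfl
    · exact absurd hγ (hPos.2.2 _ hβ)
    · exact absurd hβ (hPos.2.2 _ hγ)
    · rfl
  refine ⟨fun β hβ => hβ.1, ?_, ?_⟩
  · -- orthogonality
    intro β hβ γ hγ hne
    obtain ⟨zβ, hzβ, hsβ⟩ := mem_struct β hβ
    obtain ⟨zγ, hzγ, hsγ⟩ := mem_struct γ hγ
    have hzz : zβ ≠ zγ := fun h =>
      hne (eq_of hβ.1 hγ.1 hsβ (by rw [h]; exact hsγ))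
    have horth := hZ.2.1 zβ hzβ zγ hzγ hzz
    rcases hsβ with rfl | rfl <;> rcases hsγ with rfl | rfl <;>
      simp [inner_neg_left, inner_neg_right, hinn, horth]
  · -- closure condition
    intro β₁ hβ₁ β₂ hβ₂ β₃ hβ₃ h12 h13 h23 α hα habs1 habs2 habs3 ζ hζPos hζeq
    obtain ⟨z₁, hz₁, hs₁⟩ := mem_struct β₁ hβ₁
    obtain ⟨z₂, hz₂, hs₂⟩ := mem_struct β₂ hβ₂
    obtain ⟨z₃, hz₃, hs₃⟩ := mem_struct β₃ hβ₃
    have hz12 : z₁ ≠ z₂ := fun h => h12 (eq_of hβ₁.1 hβ₂.1 hs₁ (by rw [h]; exact hs₂))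
    have hz13 : z₁ ≠ z₃ := fun h => h13 (eq_of hβ₁.1 hβ₃.1 hs₁ (by rw [h]; exact hs₃))
    have hz23 : z₂ ≠ z₃ := fun h => h23 (eq_of hβ₂.1 hβ₃.1 hs₂ (by rw [h]; exact hs₃))
    set α' := w' α with hα'def
    have hα'Φ : α' ∈ Φ := hmapΦ' α hα
    have hwα' : w α' = α := hwi' α
    -- transported reflections
    have hrβ : ∀ {z β : E}, (β = w z ∨ β = - w z) →
        ∀ x, rootReflection β x = w (rootReflection z (w' x)) := by
      rintro z β (rfl | rfl) x
      · exact hconj z x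
      · rw [rr_neg_root]; exact hconj z x
    have hrα : ∀ x, rootReflection α x = w (rootReflection α' (w' x)) := by
      intro x; rw [← hwα']; exact hconj α' x
    -- transported inner products
    have habs' : ∀ {z β : E}, (β = w z ∨ β = - w z) → |⟪α, β⟫| = 1 → |⟪α', z⟫| = 1 := by
      rintro z β (rfl | rfl) hb
      · rw [show ⟪α', z⟫ = ⟪w α', w z⟫ from (hinn α' z).symm, hwα']; exact hb
      · rw [show ⟪α', z⟫ = ⟪w α', w z⟫ from (hinn α' z).symm, hwα']
        rw [inner_neg_right, abs_neg] at hb; exact hb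
    have habs1' := habs' hs₁ habs1
    have habs2' := habs' hs₂ habs2
    have habs3' := habs' hs₃ habs3
    set ξ' := rootReflection α' (rootReflection z₁ (rootReflection z₂ (rootReflection z₃ α')))
      with hξ'
    have key : rootReflection α (rootReflection β₁ (rootReflection β₂ (rootReflection β₃ α)))
        = w ξ' := by
      rw [hrβ hs₃, hrβ hs₂, hwi, hrβ hs₁, hwi, hrα, hwi]
    have hξ'Φ : ξ' ∈ Φ :=
      rr_memΦ hΦ hα'Φ (rr_memΦ hΦ (hzΦ z₁ hz₁)
        (rr_memΦ hΦ (hzΦ z₂ hz₂) (rr_memΦ hΦ (hzΦ z₃ hz₃) hα'Φ)))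
    rcases hPos.2.1 ξ' hξ'Φ with hp | hp
    · have hξZ : ξ' ∈ Z := hZ.2.2 z₁ hz₁ z₂ hz₂ z₃ hz₃ hz12 hz13 hz23 α' hα'Φ
        habs1' habs2' habs3' ξ' hp (Or.inl hξ')
      refine ⟨hζPos, ?_⟩
      rcases hζeq with h | h
      · exact Or.inl ⟨ξ', hξZ, (h.trans key).symm⟩
      · exact Or.inr ⟨ξ', hξZ, show w ξ' = -ζ by rw [h, key, neg_neg]⟩
    · have hξZ : (-ξ') ∈ Z := hZ.2.2 z₁ hz₁ z₂ hz₂ z₃ hz₃ hz12 hz13 hz23 α' hα'Φ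
        habs1' habs2' habs3' (-ξ') hp (Or.inr (by rw [hξ']))
      have hwneg : w (-ξ') = - w ξ' := hneg ξ'
      refine ⟨hζPos, ?_⟩
      rcases hζeq with h | h
      · exact Or.inr ⟨-ξ', hξZ, show w (-ξ') = -ζ by rw [hwneg, h.trans key]⟩
      · exact Or.inl ⟨-ξ', hξZ, show w (-ξ') = ζ by rw [hwneg, h, key]⟩

end AuxLemmas

/-- Lemma (admissible closure, part (iv)): the admissible closure commutes with the
action of the Weyl group. If `w` is a composition of reflections `r_α` with `α ∈ Φ` and
`Y` is the admissible closure of a set `X ⊆ Φ⁺` of pairwise orthogonal roots, then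
`(w(Y))⁺` is the admissible closure of `(w(X))⁺`. -/
theorem admissibleClosure_weyl_equivariant {E : Type*} [NormedAddCommGroup E]
    [InnerProductSpace ℝ E] (Φ Pos : Set E)
    (hΦ : IsSimplyLacedRootSystem Φ) (hPos : IsPositiveSystem Φ Pos)
    (l : List E) (hl : ∀ α ∈ l, α ∈ Φ)
    (w : E → E) (hw : w = (l.map rootReflection).foldr (· ∘ ·) id)
    (X : Set E) (hXPos : X ⊆ Pos) (hXorth : ∀ β ∈ X, ∀ γ ∈ X, β ≠ γ → ⟪β, γ⟫ = 0)
    (Y : Set E) (hYadm : IsAdmissible Φ Pos Y) (hXY : X ⊆ Y)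
    (hYmin : ∀ Z : Set E, IsAdmissible Φ Pos Z → X ⊆ Z → Y ⊆ Z) :
    IsAdmissible Φ Pos (posPart Pos (w '' Y)) ∧
    posPart Pos (w '' X) ⊆ posPart Pos (w '' Y) ∧
    (∀ Z : Set E, IsAdmissible Φ Pos Z → posPart Pos (w '' X) ⊆ Z →
      posPart Pos (w '' Y) ⊆ Z) := by
  obtain ⟨w', hW, hW'⟩ := weylPair_foldr hΦ l hl
  rw [← hw] at hW hW'
  obtain ⟨hwi, hwi', hinn, hneg, hmapΦ, hmapΦ', hconj⟩ := hW
  have hW2 : WeylPairAux Φ w w' := ⟨hwi, hwi', hinn, hneg, hmapΦ, hmapΦ', hconj⟩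
  refine ⟨admissible_posPart_image hΦ hPos hW2 hYadm, ?_, ?_⟩
  · rintro ζ ⟨h1, h2⟩
    exact ⟨h1, h2.imp (fun h => (Set.image_mono hXY : w '' X ⊆ w '' Y) h) (fun h => (Set.image_mono hXY : w '' X ⊆ w '' Y) h)⟩
  · intro Z hZadm hZX
    -- pull back `Z` through `w'`
    have hZ' : IsAdmissible Φ Pos (posPart Pos (w' '' Z)) :=
      admissible_posPart_image hΦ hPos hW' hZadm
    have hXZ' : X ⊆ posPart Pos (w' '' Z) := by
      intro β hβ
      have hβPos : β ∈ Pos := hXPos hβ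
      have hβΦ : β ∈ Φ := hPos.1 hβPos
      have hwβΦ : w β ∈ Φ := hmapΦ β hβΦ
      rcases hPos.2.1 (w β) hwβΦ with hp | hp
      · have : w β ∈ Z := hZX ⟨hp, Or.inl ⟨β, hβ, rfl⟩⟩
        exact ⟨hβPos, Or.inl ⟨w β, this, hwi β⟩⟩
      · have : -w β ∈ Z := hZX ⟨hp, Or.inr (by rw [neg_neg]; exact ⟨β, hβ, rfl⟩)⟩
        refine ⟨hβPos, Or.inr ⟨-w β, this, ?_⟩⟩
        rw [hW'.2.2.2.1, hwi β]
    have hYZ' : Y ⊆ posPart Pos (w' '' Z) := hYmin _ hZ' hXZ'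
    rintro ζ ⟨hζPos, hζ⟩
    rcases hζ with ⟨y, hy, rfl⟩ | ⟨y, hy, hyζ⟩
    · obtain ⟨_, hy2⟩ := hYZ' hy
      rcases hy2 with ⟨z, hz, hzy⟩ | ⟨z, hz, hzy⟩
      · rwa [show z = w y by rw [← hzy, hwi']] at hz
      · exfalso
        have : z = -(w y) := by rw [← hwi' z, hzy, hneg]
        exact hPos.2.2 _ hζPos (this ▸ hZadm.1 hz)
    · -- here w y = -ζ
      obtain ⟨_, hy2⟩ := hYZ' hy
      rcases hy2 with ⟨z, hz, hzy⟩ | ⟨z, hz, hzy⟩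
      · exfalso
        have : z = w y := by rw [← hzy, hwi']
        rw [this, hyζ] at hz
        exact hPos.2.2 _ hζPos (hZadm.1 hz)
      · have : z = -(w y) := by rw [← hwi' z, hzy, hneg]
        rw [this, hyζ, neg_neg] at hz
        exact hz
end

section
/- For every natural number n ≥ 1, the identity ∑_{t=0}^{⌊n/2⌋} (n! / (2^t · t! · (n−2t)!))² · (n−2t)! = ∏_{m=1}^{n} (2m−1) holds; that is, the sum over t of the square of the number of ways to choose t disjoint unordered pairs from n objects, multiplied by (n−2t)!, equals the product of the first n odd natural numbers. -/
open Finset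

noncomputable def Fq (n t : ℕ) : ℚ :=
  (n.factorial : ℚ)^2 / (4^t * (t.factorial : ℚ)^2 * ((n - 2*t).factorial : ℚ))

noncomputable def Gq (n t : ℕ) : ℚ :=
  4 * t^2 * (n.factorial : ℚ)^2 / (4^t * (t.factorial : ℚ)^2 * ((n + 1 - 2*t).factorial : ℚ))

lemma ptwise (n t : ℕ) (h : 2*t + 1 ≤ n) :
    Fq (n+1) t + Gq n (t+1) = (2*n+1) * Fq n t + Gq n t := by
  obtain ⟨k, rfl⟩ : ∃ k, n = 2*t + k + 1 := ⟨n - 2*t - 1, by omega⟩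
  have e1 : 2*t + k + 1 - 2*t = k + 1 := by omega
  have e2 : 2*t + k + 1 + 1 - 2*t = k + 2 := by omega
  have e3 : 2*t + k + 1 + 1 - 2*(t+1) = k := by omega
  simp only [Fq, Gq, e1, e2, e3]
  have f1 : ((k+2).factorial : ℚ) = (k+2) * (k+1) * k.factorial := by
    push_cast [Nat.factorial_succ]; ring
  have f2 : ((k+1).factorial : ℚ) = (k+1) * k.factorial := by
    push_cast [Nat.factorial_succ]; ring
  have f3 : ((t+1).factorial : ℚ) = (t+1) * t.factorial := by
    push_cast [Nat.factorial_succ]; ring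
  have f4 : ((2*t+k+1+1).factorial : ℚ) = (2*t+k+2) * (2*t+k+1).factorial := by
    have : 2*t+k+1+1 = (2*t+k+1)+1 := by omega
    rw [this]; push_cast [Nat.factorial_succ]; ring
  have hk : (k.factorial : ℚ) ≠ 0 := by positivity
  have ht : (t.factorial : ℚ) ≠ 0 := by positivity
  have h4 : (4:ℚ)^t ≠ 0 := by positivity
  rw [f1, f2, f3, f4]
  push_cast
  field_simp
  ring

lemma end_even (m : ℕ) :
    Fq (2*m+1) m = (2*(2*m)+1) * Fq (2*m) m + Gq (2*m) m := by
  have e1 : 2*m + 1 - 2*m = 1 := by omega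
  have e2 : 2*m - 2*m = 0 := by omega
  simp only [Fq, Gq, e1, e2]
  have f4 : ((2*m+1).factorial : ℚ) = (2*m+1) * (2*m).factorial := by
    push_cast [Nat.factorial_succ]; ring
  have ht : ((m.factorial : ℚ)) ≠ 0 := by positivity
  have h4 : (4:ℚ)^m ≠ 0 := by positivity
  rw [f4]
  simp [Nat.factorial]
  field_simp
  ring

lemma end_odd (m : ℕ) :
    Fq (2*m+2) (m+1) = Gq (2*m+1) (m+1) := by
  have e1 : 2*m + 2 - 2*(m+1) = 0 := by omega
  have e2 : 2*m + 1 + 1 - 2*(m+1) = 0 := by omega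
  simp only [Fq, Gq, e1, e2]
  have f1 : ((2*m+2).factorial : ℚ) = (2*m+2) * (2*m+1).factorial := by
    have : 2*m+2 = (2*m+1)+1 := by omega
    rw [this]; push_cast [Nat.factorial_succ]; ring
  have f3 : ((m+1).factorial : ℚ) = (m+1) * m.factorial := by
    push_cast [Nat.factorial_succ]; ring
  have ht : ((m.factorial : ℚ)) ≠ 0 := by positivity
  have h4 : (4:ℚ)^m ≠ 0 := by positivity
  rw [f1, f3]
  simp [Nat.factorial]
  field_simp
  ring

lemma key_s18 (n : ℕ) :
    ∑ t ∈ Finset.range (n / 2 + 1), Fq n t = ∏ m ∈ Finset.range n, ((2*m+1 : ℕ) : ℚ) := by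
  induction n with
  | zero => simp [Fq, Nat.factorial]
  | succ n ih =>
    have hG0 : Gq n 0 = 0 := by simp [Gq]
    rcases Nat.even_or_odd n with ⟨m, hm⟩ | ⟨m, hm⟩
    · -- n = 2m (hm : n = m + m)
      have hm' : n = 2*m := by omega
      subst hm'
      have r1 : (2*m+1)/2 + 1 = m + 1 := by omega
      have r2 : (2*m)/2 + 1 = m + 1 := by omega
      rw [r1]
      rw [r2] at ih
      rw [Finset.sum_range_succ]
      have step : ∀ t ∈ Finset.range m,
          Fq (2*m+1) t = (2*(2*m)+1) * Fq (2*m) t + (Gq (2*m) t - Gq (2*m) (t+1)) := by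
        intro t htm
        simp only [Finset.mem_range] at htm
        have := ptwise (2*m) t (by omega)
        push_cast at this ⊢
        linarith [this]
      rw [Finset.sum_congr rfl step, Finset.sum_add_distrib,
        Finset.sum_range_sub' (fun t => Gq (2*m) t), hG0]
      rw [end_even m]
      have hsplit : ∑ t ∈ Finset.range (m+1), Fq (2*m) t
          = ∑ t ∈ Finset.range m, Fq (2*m) t + Fq (2*m) m := Finset.sum_range_succ _ _
      rw [Finset.prod_range_succ, ← ih, hsplit, ← Finset.mul_sum]
      push_cast
      ring
    · -- n = 2m+1
      have hm' : n = 2*m+1 := by omega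
      subst hm'
      have r1 : (2*m+1+1)/2 + 1 = m + 2 := by omega
      have r2 : (2*m+1)/2 + 1 = m + 1 := by omega
      rw [r1]
      rw [r2] at ih
      rw [Finset.sum_range_succ]
      have step : ∀ t ∈ Finset.range (m+1),
          Fq (2*m+1+1) t = (2*(2*m+1)+1) * Fq (2*m+1) t + (Gq (2*m+1) t - Gq (2*m+1) (t+1)) := by
        intro t htm
        simp only [Finset.mem_range] at htm
        have := ptwise (2*m+1) t (by omega)
        push_cast at this ⊢
        linarith [this]
      rw [Finset.sum_congr rfl step, Finset.sum_add_distrib,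
        Finset.sum_range_sub' (fun t => Gq (2*m+1) t), hG0]
      have : Fq (2*m+1+1) (m+1) = Gq (2*m+1) (m+1) := by
        have := end_odd m
        simpa using this
      rw [this]
      rw [Finset.prod_range_succ, ← ih, ← Finset.mul_sum]
      push_cast
      ring

lemma pow_fac_dvd (t : ℕ) : 2^t * t.factorial ∣ (2*t).factorial := by
  induction t with
  | zero => simp
  | succ t ih =>
    have : (2*(t+1)).factorial = (2*t+2) * ((2*t+1) * (2*t).factorial) := by
      have h : 2*(t+1) = (2*t+1)+1 := by omega
      rw [h, Nat.factorial_succ, Nat.factorial_succ]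
    rw [this]
    have h1 : 2^(t+1) * (t+1).factorial = (2*t+2) * (2^t * t.factorial) := by
      rw [Nat.factorial_succ]; ring
    rw [h1]
    exact Nat.mul_dvd_mul_left _ (dvd_trans ih (dvd_mul_left _ _))

lemma denom_dvd (n t : ℕ) (h : 2*t ≤ n) :
    2^t * t.factorial * (n - 2*t).factorial ∣ n.factorial := by
  have h1 := Nat.choose_mul_factorial_mul_factorial h
  calc 2^t * t.factorial * (n - 2*t).factorial
      ∣ (2*t).factorial * (n - 2*t).factorial :=
        mul_dvd_mul_right (pow_fac_dvd t) _
    _ ∣ n.choose (2*t) * ((2*t).factorial * (n-2*t).factorial) := dvd_mul_left _ _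
    _ = n.factorial := by rw [← mul_assoc, h1]

/-- For every `n ≥ 1`,
`∑_{t=0}^{⌊n/2⌋} (n! / (2^t · t! · (n−2t)!))² · (n−2t)! = ∏_{m=1}^{n} (2m−1)`:
the sum over `t` of the square of the number of partial matchings with `t` pairs on an
`n`-element set, multiplied by `(n−2t)!`, equals the product of the first `n` odd
natural numbers (each quotient here is exact). -/
theorem sum_matchings_sq_eq_doubleFactorial (n : ℕ) (hn : 1 ≤ n) :
    ∑ t ∈ Finset.range (n / 2 + 1),
        (n.factorial / (2 ^ t * t.factorial * (n - 2 * t).factorial)) ^ 2 *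
          (n - 2 * t).factorial =
      ∏ m ∈ Finset.range n, (2 * m + 1) := by
  have := key_s18 n
  apply Nat.cast_injective (R := ℚ)
  push_cast at this ⊢
  rw [← this]
  apply Finset.sum_congr rfl
  intro t ht
  simp only [Finset.mem_range] at ht
  have h2t : 2*t ≤ n := by omega
  have hdvd := denom_dvd n t h2t
  have hne : ((2^t * t.factorial * (n - 2*t).factorial : ℕ) : ℚ) ≠ 0 := by positivity
  rw [Nat.cast_div hdvd hne]
  simp only [Fq]
  have ht' : ((t.factorial : ℚ)) ≠ 0 := by positivity
  have hnt : (((n-2*t).factorial : ℚ)) ≠ 0 := by positivity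
  have h2 : (2:ℚ)^t ≠ 0 := by positivity
  push_cast
  field_simp
  have h42 : (4:ℚ)^t = 2^(t*2) := by rw [pow_mul']; norm_num
  rw [h42]
  ring
end
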